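/- The ternary rich word 0020102202 cannot be eventually extended richly in 3 ways: there is no finite word u such that 0020102202·u, 0020102202·u·0, 0020102202·u·1, and 0020102202·u·2 are all rich. -/

import Mathlib

open List

variable {A : Type*}

/-- All factors (contiguous subwords) of a word, as a list. -/
def Factors (w : List A) : List (List A) := w.tails.flatMap List.inits

/-- The set of distinct palindromic factors of `w` (including the empty word). -/
def palFactors [DecidableEq A] (w : List A) : Finset (List A) :=
  ((Factors w).filter (fun u => decide (u.reverse = u))).toFinset

/-- A word is rich if it has exactly `|w| + 1` distinct palindromic factors. -/
def IsRich [DecidableEq A] (w : List A) : Prop :=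
  (palFactors w).card = w.length + 1

/-- The defect of a finite word. -/
def defect [DecidableEq A] (w : List A) : ℕ :=
  w.length + 1 - (palFactors w).card

/-- `u` is a (finite) factor of the infinite word `z`. -/
def FactorOfInf (u : List A) (z : ℕ → A) : Prop :=
  ∃ i, u = (List.range u.length).map (fun k => z (i + k))

/-- An infinite word is rich if all of its finite factors are rich. -/
def InfRich [DecidableEq A] (z : ℕ → A) : Prop :=
  ∀ u : List A, FactorOfInf u z → IsRich u

/-- The longest palindromic suffix of `w`. -/
def lps [DecidableEq A] (w : List A) : List A :=
  (w.tails.find? (fun u => decide (u.reverse = u))).getD []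

/-- The number of occurrences of `u` as a factor of `w` (counted by position). -/
def occCount [DecidableEq A] (u w : List A) : ℕ :=
  w.tails.countP (fun t => decide (u <+: t))

/-- The periodic infinite word `u^∞`. -/
def periodicWord (u : List A) (hu : u ≠ []) : ℕ → A :=
  fun i => u.get ⟨i % u.length, Nat.mod_lt _ (List.length_pos_iff.mpr hu)⟩

/-!
A new palindromic suffix of `v ++ [a]` is unique, since a shorter palindromic suffix is a prefix of
a longer one and so already occurs in `v`; hence `v ++ [a]` is rich only if `v` is rich and
`v ++ [a]` has a palindrome that `v` lacks. Along every rich extension `w₀ ++ u` all factors of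
length 4 lie in an explicit set of 28 blocks: if appending `a` makes the last block `t` unlisted,
then a palindromic suffix longer than `t` would start with the unlisted `t.reverse`, which cannot
occur earlier, and the short palindromic suffixes of `t` are checked to occur in `w₀` or in the
previous block. For each of the 28 blocks one of the three letters passes the same two checks and
so creates no new palindrome.
-/

section Palindromes

theorem mem_factors {w x : List A} : x ∈ Factors w ↔ x <:+: w := by
  simp only [Factors, List.mem_flatMap, List.mem_tails, List.mem_inits]
  constructor
  · rintro ⟨t, hts, hxt⟩
    exact hxt.isInfix.trans hts.isInfix
  · intro h
    obtain ⟨t, hxt, htw⟩ := List.infix_iff_prefix_suffix.mp h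
    exact ⟨t, htw, hxt⟩

theorem List.IsPrefix.infix_of_suffix_append_singleton {v x y : List A} {a : A}
    (hyx : y <+: x) (hx : x <:+ v ++ [a]) (hlen : y.length < x.length) : y <:+: v := by
  rcases List.suffix_concat_iff.mp hx with rfl | ⟨x', rfl, hx'⟩
  · simp at hlen
  · rcases List.prefix_concat_iff.mp hyx with rfl | hyx'
    · simp at hlen
    · exact hyx'.isInfix.trans hx'.isInfix

theorem exists_suffix_length_eq {v : List A} {k : ℕ} (h : k ≤ v.length) :
    ∃ s, s <:+ v ∧ s.length = k :=
  ⟨v.drop (v.length - k), List.drop_suffix _ _, by simp only [List.length_drop]; omega⟩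

theorem tail_append_singleton_suffix {v s : List A} (a : A) (h : s <:+ v) :
    s.tail ++ [a] <:+ v ++ [a] :=
  List.suffix_concat_iff.mpr (Or.inr ⟨s.tail, rfl, (List.tail_suffix s).trans h⟩)

variable [DecidableEq A]

theorem mem_palFactors {w x : List A} : x ∈ palFactors w ↔ x.reverse = x ∧ x <:+: w := by
  simp only [palFactors, List.mem_toFinset, List.mem_filter, decide_eq_true_eq, mem_factors]
  exact and_comm

theorem palFactors_mono {v w : List A} (h : v <:+: w) : palFactors v ⊆ palFactors w :=
  fun _ hx ↦
    let ⟨hpal, hxv⟩ := mem_palFactors.mp hx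
    mem_palFactors.mpr ⟨hpal, hxv.trans h⟩

theorem suffix_of_mem_palFactors_sdiff {v x : List A} {a : A}
    (hx : x ∈ palFactors (v ++ [a]) \ palFactors v) : x <:+ v ++ [a] := by
  obtain ⟨hx, hxv⟩ := Finset.mem_sdiff.mp hx
  obtain ⟨hpal, hinf⟩ := mem_palFactors.mp hx
  exact (List.infix_concat_iff.mp hinf).resolve_right fun h ↦ hxv (mem_palFactors.mpr ⟨hpal, h⟩)

theorem eq_of_mem_palFactors_sdiff {v p q : List A} {a : A}
    (hp : p ∈ palFactors (v ++ [a]) \ palFactors v) (hq : q ∈ palFactors (v ++ [a]) \ palFactors v)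
    (hlen : p.length ≤ q.length) : p = q := by
  have hps := suffix_of_mem_palFactors_sdiff hp
  have hqs := suffix_of_mem_palFactors_sdiff hq
  have hppal := (mem_palFactors.mp (Finset.mem_sdiff.mp hp).1).1
  have hqpal := (mem_palFactors.mp (Finset.mem_sdiff.mp hq).1).1
  -- a palindromic suffix of a palindrome is also a prefix of it
  have hpq : p <+: q := by
    simpa [hppal, hqpal] using List.reverse_prefix.mpr (List.suffix_of_suffix_length_le hps hqs hlen)
  rcases hlen.lt_or_eq with hlt | heq
  · exact absurd (mem_palFactors.mpr ⟨hppal, hpq.infix_of_suffix_append_singleton hqs hlt⟩)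
      (Finset.mem_sdiff.mp hp).2
  · exact hpq.eq_of_length heq

theorem card_palFactors_append_singleton_le (v : List A) (a : A) :
    (palFactors (v ++ [a])).card ≤ (palFactors v).card + 1 := by
  have hnew : (palFactors (v ++ [a]) \ palFactors v).card ≤ 1 :=
    Finset.card_le_one.mpr fun p hp q hq ↦ (le_total p.length q.length).elim
      (eq_of_mem_palFactors_sdiff hp hq) fun h ↦ (eq_of_mem_palFactors_sdiff hq hp h).symm
  have := Finset.card_le_card_sdiff_add_card (s := palFactors (v ++ [a])) (t := palFactors v)
  omega

theorem card_palFactors_le (v : List A) : (palFactors v).card ≤ v.length + 1 := by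
  induction v using List.reverseRecOn with
  | nil => simp [palFactors, Factors]
  | append_singleton v a ih =>
    have := card_palFactors_append_singleton_le v a
    simp only [List.length_append, List.length_singleton]
    omega

theorem IsRich.of_append_singleton {v : List A} {a : A} (h : IsRich (v ++ [a])) : IsRich v := by
  have h₁ := card_palFactors_append_singleton_le v a
  have h₂ := card_palFactors_le v
  simp only [IsRich, List.length_append, List.length_singleton] at h ⊢
  omega

theorem palFactors_append_singleton_eq {v t : List A} {a : A} (ht : t <:+ v ++ [a])
    (hrev : ¬ t.reverse <:+: v) (hpal : ∀ x ∈ t.tails, x.reverse = x → x <:+: v) :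
    palFactors (v ++ [a]) = palFactors v := by
  refine subset_antisymm (fun x hx ↦ ?_) (palFactors_mono (List.prefix_append v [a]).isInfix)
  obtain ⟨hxpal, hx⟩ := mem_palFactors.mp hx
  refine mem_palFactors.mpr ⟨hxpal, ?_⟩
  rcases List.infix_concat_iff.mp hx with hxs | hxv
  · rcases le_or_gt x.length t.length with hle | hlt
    · exact hpal x ((List.mem_tails _ _).mpr (List.suffix_of_suffix_length_le hxs ht hle)) hxpal
    · have htx : t.reverse <+: x := by
        simpa [hxpal] using List.reverse_prefix.mpr (List.suffix_of_suffix_length_le ht hxs hlt.le)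
      exact absurd (htx.infix_of_suffix_append_singleton hxs (by simpa using hlt)) hrev
  · exact hxv

theorem not_isRich_append_singleton {v t : List A} {a : A} (ht : t <:+ v ++ [a])
    (hrev : ¬ t.reverse <:+: v) (hpal : ∀ x ∈ t.tails, x.reverse = x → x <:+: v) :
    ¬ IsRich (v ++ [a]) := by
  have := card_palFactors_le v
  rw [IsRich, palFactors_append_singleton_eq ht hrev hpal, List.length_append]
  simp only [List.length_singleton]
  omega

end Palindromes

def w₀ : List (Fin 3) := [0, 0, 2, 0, 1, 0, 2, 2, 0, 2]

/-- Found by exploring the rich extensions of `w₀` one letter at a time. -/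
def allowedBlocks : List (List (Fin 3)) := [
  [0, 0, 0, 0], [0, 0, 0, 2], [0, 0, 2, 0], [0, 1, 0, 1], [0, 1, 0, 2], [0, 1, 1, 0], [0, 1, 1, 1],
  [0, 2, 0, 0], [0, 2, 0, 1], [0, 2, 2, 0], [0, 2, 2, 2], [1, 0, 1, 0], [1, 0, 1, 1], [1, 0, 2, 0],
  [1, 0, 2, 2], [1, 1, 0, 1], [1, 1, 0, 2], [1, 1, 1, 0], [1, 1, 1, 1], [2, 0, 0, 0], [2, 0, 0, 2],
  [2, 0, 1, 0], [2, 0, 1, 1], [2, 0, 2, 2], [2, 2, 0, 1], [2, 2, 0, 2], [2, 2, 2, 0], [2, 2, 2, 2]]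

def BlocksAllowed (v : List (Fin 3)) : Prop :=
  ∀ x : List (Fin 3), x.length = 4 → x <:+: v → x ∈ allowedBlocks

/-- `s` stands for the last block of a word with prefix `w₀` and `s.tail ++ [a]` for the last block
after appending `a`. -/
def KillsRichness (s : List (Fin 3)) (a : Fin 3) : Prop :=
  (s.tail ++ [a]).reverse ∉ allowedBlocks ∧
    ∀ x ∈ (s.tail ++ [a]).tails, x.reverse = x → x <:+: w₀ ∨ x <:+: s

instance : DecidableRel KillsRichness := fun _ _ ↦ by
  unfold KillsRichness
  infer_instance

theorem blocksAllowed_w₀ : ∀ x ∈ Factors w₀, x.length = 4 → x ∈ allowedBlocks := by decide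

theorem killsRichness_or_mem_allowedBlocks :
    ∀ s ∈ allowedBlocks, ∀ a, KillsRichness s a ∨ s.tail ++ [a] ∈ allowedBlocks := by decide

theorem exists_killsRichness : ∀ s ∈ allowedBlocks, ∃ a, KillsRichness s a := by decide

theorem not_isRich_of_killsRichness {v s : List (Fin 3)} {a : Fin 3} (hv : BlocksAllowed v)
    (hw₀ : w₀ <+: v) (hs : s <:+ v) (hs4 : s.length = 4) (hk : KillsRichness s a) :
    ¬ IsRich (v ++ [a]) := by
  refine not_isRich_append_singleton (tail_append_singleton_suffix a hs)
    (fun h ↦ hk.1 (hv _ (by simp [hs4]) h)) fun x hx hpal ↦ ?_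
  rcases hk.2 x hx hpal with h | h
  · exact h.trans hw₀.isInfix
  · exact h.trans hs.isInfix

theorem BlocksAllowed.append_singleton {v : List (Fin 3)} {a : Fin 3} (hv : BlocksAllowed v)
    (hw₀ : w₀ <+: v) (hrich : IsRich (v ++ [a])) : BlocksAllowed (v ++ [a]) := by
  obtain ⟨s, hs, hs4⟩ := exists_suffix_length_eq (hw₀.length_le.trans' (by decide) : 4 ≤ v.length)
  have hnew : s.tail ++ [a] ∈ allowedBlocks :=
    (killsRichness_or_mem_allowedBlocks s (hv s hs4 hs.isInfix) a).resolve_left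
      fun hk ↦ not_isRich_of_killsRichness hv hw₀ hs hs4 hk hrich
  intro x hx4 hx
  rcases List.infix_concat_iff.mp hx with hxs | hxv
  · have hlen : x.length = (s.tail ++ [a]).length := by simp [hx4, hs4]
    rwa [List.suffix_of_suffix_length_le hxs (tail_append_singleton_suffix a hs) hlen.le
      |>.eq_of_length hlen]
  · exact hv x hx4 hxv

theorem blocksAllowed_of_isRich (u : List (Fin 3)) (h : IsRich (w₀ ++ u)) :
    BlocksAllowed (w₀ ++ u) := by
  induction u using List.reverseRecOn with
  | nil =>
    rw [List.append_nil]
    exact fun x hx4 hx ↦ blocksAllowed_w₀ x (mem_factors.mpr hx) hx4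
  | append_singleton u a ih =>
    rw [← List.append_assoc] at h ⊢
    exact (ih h.of_append_singleton).append_singleton (List.prefix_append _ _) h

theorem ternary_word_not_eventually_extendable_three_ways :
    ¬ ∃ u : List (Fin 3),
      IsRich (([0, 0, 2, 0, 1, 0, 2, 2, 0, 2] : List (Fin 3)) ++ u) ∧
      ∀ a : Fin 3,
        IsRich (([0, 0, 2, 0, 1, 0, 2, 2, 0, 2] : List (Fin 3)) ++ u ++ [a]) := by
  rintro ⟨u, hu, hext⟩
  have hblocks := blocksAllowed_of_isRich u hu
  obtain ⟨s, hs, hs4⟩ := exists_suffix_length_eq (v := w₀ ++ u) (k := 4) (by simp [w₀])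
  obtain ⟨a, ha⟩ := exists_killsRichness s (hblocks s hs4 hs.isInfix)
  exact not_isRich_of_killsRichness hblocks (List.prefix_append _ _) hs hs4 ha (hext a)
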